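/- arXiv:1912.11635 — 5 statements merged into one kernel-verified Lean document; each statement's English description precedes it below -/
import Mathlib

section
/- Let k be a commutative ring, A a commutative k-algebra, and D = (D_α)_{α∈Δ} a Δ-variate Hasse–Schmidt derivation of A over k, where Δ ⊆ ℕ^q is a co-ideal. Suppose β ∈ Δ with β ≠ 0 and gcd(β₁,...,β_q) = 1, and D_γ = 0 for every γ ∈ Δ \ {0} whose ∼-class is strictly smaller than [β]. Then the sequence E = (E_r)_{r} defined by E_r = D_{rβ} (for r with rβ ∈ Δ) satisfies the Hasse–Schmidt conditions: E₀ = id and E_r(xy) = Σ_{s+t=r} E_s(x)E_t(y) for all x, y ∈ A. -/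
/-!
Expand `D (r • β) (x * y)` by the Leibniz rule over all `γ ≤ r • β` and write `σ = r • β - γ`.
If `γ` is not a multiple of `β`, then `γ` and `σ` are nonzero and not proportional to
`γ + σ = r • β`, so the class `[r • β] = [β]` lies strictly between `[γ]` and `[σ]`: one of them
is `≺ [β]` and the term vanishes. Since `gcd β = 1`, the surviving terms are exactly
`γ = s • β` with `s ≤ r`, which is the Hasse–Schmidt sum for `E_s = D (s • β)`.
-/

/-- Normalization of a pair of naturals: `g(a,b) = (0,0)` if `a = b = 0`, otherwise
`(a,b)/gcd(a,b)`. -/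
def g2 (a b : ℕ) : ℕ × ℕ :=
  if a = 0 ∧ b = 0 then (0, 0) else (a / Nat.gcd a b, b / Nat.gcd a b)

/-- The slope order on pairs: `u ≺² v ⟺ v₂u₁ < v₁u₂`. -/
def prec2 (u v : ℕ × ℕ) : Prop := v.2 * u.1 < v.1 * u.2

/-- The recursively defined total order `≺^q` on `q`-tuples (represented as lists). -/
def precL : List ℕ → List ℕ → Prop
  | [a, b], [c, d] => prec2 (a, b) (c, d)
  | a :: b :: c :: r, a' :: b' :: c' :: r' =>
      (g2 a b = (0, 0) ∧ g2 a' b' ≠ (0, 0)) ∨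
      (g2 a b ≠ (0, 0) ∧ g2 a' b' ≠ (0, 0) ∧ prec2 (g2 a b) (g2 a' b')) ∨
      (g2 a b = g2 a' b' ∧ precL (Nat.gcd a b :: c :: r) (Nat.gcd a' b' :: c' :: r'))
  | _, _ => False
termination_by l _ => l.length

theorem gcd_mul_g2_fst (a b : ℕ) : Nat.gcd a b * (g2 a b).1 = a := by
  unfold g2
  split_ifs with h
  · simp [h.1]
  · exact Nat.mul_div_cancel' (Nat.gcd_dvd_left a b)

theorem gcd_mul_g2_snd (a b : ℕ) : Nat.gcd a b * (g2 a b).2 = b := by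
  unfold g2
  split_ifs with h
  · simp [h.2]
  · exact Nat.mul_div_cancel' (Nat.gcd_dvd_right a b)

theorem g2_eq_zero_iff {a b : ℕ} : g2 a b = (0, 0) ↔ a = 0 ∧ b = 0 := by
  refine ⟨fun h => ⟨?_, ?_⟩, fun ⟨ha, hb⟩ => by simp [g2, ha, hb]⟩
  · simpa [h] using (gcd_mul_g2_fst a b).symm
  · simpa [h] using (gcd_mul_g2_snd a b).symm

theorem g2_mul_mul {t : ℕ} (ht : t ≠ 0) (a b : ℕ) : g2 (t * a) (t * b) = g2 a b := by
  simp only [g2, mul_eq_zero, ht, false_or, Nat.gcd_mul_left,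
    Nat.mul_div_mul_left _ _ (Nat.pos_of_ne_zero ht)]

theorem prec2_mul_mul_iff {g h : ℕ} (hg : g ≠ 0) (hh : h ≠ 0) (a b c d : ℕ) :
    prec2 (g * a, g * b) (h * c, h * d) ↔ prec2 (a, b) (c, d) := by
  unfold prec2
  rw [show h * d * (g * a) = g * h * (d * a) by ring,
    show h * c * (g * b) = g * h * (c * b) by ring]
  exact Nat.mul_lt_mul_left (Nat.pos_of_ne_zero (mul_ne_zero hg hh))

theorem prec2_g2_iff {a b c d : ℕ} (hab : ¬(a = 0 ∧ b = 0)) (hcd : ¬(c = 0 ∧ d = 0)) :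
    prec2 (g2 a b) (g2 c d) ↔ prec2 (a, b) (c, d) := by
  have hg : Nat.gcd a b ≠ 0 := fun h => hab (Nat.gcd_eq_zero_iff.mp h)
  have hh : Nat.gcd c d ≠ 0 := fun h => hcd (Nat.gcd_eq_zero_iff.mp h)
  rw [← prec2_mul_mul_iff hg hh, gcd_mul_g2_fst, gcd_mul_g2_snd, gcd_mul_g2_fst, gcd_mul_g2_snd]

theorem prec2_add_right_iff (a b a' b' : ℕ) : prec2 (a, b) (a + a', b + b') ↔ a * b' < a' * b := by
  unfold prec2
  constructor <;> intro h <;> nlinarith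

theorem prec2_add_left_iff (a b a' b' : ℕ) : prec2 (a', b') (a + a', b + b') ↔ a' * b < a * b' := by
  rw [add_comm a, add_comm b]
  exact prec2_add_right_iff a' b' a b

theorem exists_coprime_of_mul_eq_mul {a b a' b' : ℕ} (hab : ¬(a = 0 ∧ b = 0))
    (h : a * b' = a' * b) :
    ∃ g g' p q : ℕ, g ≠ 0 ∧ Nat.Coprime p q ∧
      a = g * p ∧ b = g * q ∧ a' = g' * p ∧ b' = g' * q := by
  -- `x * gcd a b = gcd (x * a) (x * b)` turns the cross relation into one between the gcds
  have ha' : a' * Nat.gcd a b = Nat.gcd a' b' * a := by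
    rw [← Nat.gcd_mul_left, mul_comm a' a, ← h, Nat.gcd_mul_left, mul_comm]
  have hb' : b' * Nat.gcd a b = Nat.gcd a' b' * b := by
    rw [← Nat.gcd_mul_left, mul_comm b' a, h, mul_comm a' b, mul_comm b' b, Nat.gcd_mul_left,
      mul_comm]
  have hg : 0 < Nat.gcd a b := Nat.pos_of_ne_zero fun h => hab (Nat.gcd_eq_zero_iff.mp h)
  have hcop := Nat.coprime_div_gcd_div_gcd hg
  set g := Nat.gcd a b
  obtain ⟨p, hp⟩ : g ∣ a := Nat.gcd_dvd_left a b
  obtain ⟨q, hq⟩ : g ∣ b := Nat.gcd_dvd_right a b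
  rw [hp, hq, Nat.mul_div_cancel_left _ hg, Nat.mul_div_cancel_left _ hg] at hcop
  refine ⟨g, Nat.gcd a' b', p, q, hg.ne', hcop, hp, hq, ?_, ?_⟩
  · refine Nat.eq_of_mul_eq_mul_right hg ?_
    rw [ha', hp]
    ring
  · refine Nat.eq_of_mul_eq_mul_right hg ?_
    rw [hb', hq]
    ring

def Proportional (u w : List ℕ) : Prop :=
  ∃ s t : ℕ, s ≠ 0 ∧ t ≠ 0 ∧ u.map (s * ·) = w.map (t * ·)

theorem Proportional.cons_cons {g G x y x' y' : ℕ} {u w : List ℕ}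
    (h : Proportional (g :: u) (G :: w))
    (hxy : ∀ s t : ℕ, s * g = t * G → s * x = t * x' ∧ s * y = t * y') :
    Proportional (x :: y :: u) (x' :: y' :: w) := by
  obtain ⟨s, t, hs, ht, hsw⟩ := h
  simp only [List.map_cons, List.cons.injEq] at hsw
  refine ⟨s, t, hs, ht, ?_⟩
  simp only [List.map_cons, List.cons.injEq]
  exact ⟨(hxy s t hsw.1).1, (hxy s t hsw.1).2, hsw.2⟩

theorem prec2_add_cases {a b a' b' : ℕ} (hab : ¬(a = 0 ∧ b = 0)) :
    prec2 (a, b) (a + a', b + b') ∨ Proportional [a, b] [a + a', b + b'] ∨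
      prec2 (a', b') (a + a', b + b') := by
  rw [prec2_add_right_iff, prec2_add_left_iff]
  rcases lt_trichotomy (a * b') (a' * b) with h | h | h
  · exact Or.inl h
  · obtain ⟨g, g', p, q, hg, -, rfl, rfl, rfl, rfl⟩ := exists_coprime_of_mul_eq_mul hab h
    refine Or.inr (Or.inl ⟨g + g', g, by omega, hg, ?_⟩)
    simp only [List.map_cons, List.map_nil]
    ring_nf
  · exact Or.inr (Or.inr h)

theorem g2_prec2_g2_add {a b a' b' : ℕ} (hab : ¬(a = 0 ∧ b = 0)) (h : a * b' < a' * b) :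
    g2 a b ≠ (0, 0) ∧ g2 (a + a') (b + b') ≠ (0, 0) ∧ prec2 (g2 a b) (g2 (a + a') (b + b')) := by
  have hsum : ¬(a + a' = 0 ∧ b + b' = 0) := fun ⟨h1, h2⟩ => hab ⟨by omega, by omega⟩
  refine ⟨?_, ?_, ?_⟩
  · rwa [Ne, g2_eq_zero_iff]
  · rwa [Ne, g2_eq_zero_iff]
  · rwa [prec2_g2_iff hab hsum, prec2_add_right_iff]

theorem precL_add_cases : ∀ (a b a' b' : ℕ) (r r' : List ℕ), r.length = r'.length →
    (∃ x ∈ a :: b :: r, x ≠ 0) → (∃ x ∈ a' :: b' :: r', x ≠ 0) →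
    precL (a :: b :: r) (List.zipWith (· + ·) (a :: b :: r) (a' :: b' :: r')) ∨
      Proportional (a :: b :: r) (List.zipWith (· + ·) (a :: b :: r) (a' :: b' :: r')) ∨
      precL (a' :: b' :: r') (List.zipWith (· + ·) (a :: b :: r) (a' :: b' :: r'))
  | a, b, a', b', [], [], _, hu, _ => by
    simp only [List.zipWith_cons_cons, List.zipWith_nil_left]
    rw [precL, precL]
    exact prec2_add_cases fun ⟨ha, hb⟩ => by simp [ha, hb] at hu
  | a, b, a', b', c :: r, c' :: r', hlen, hu, hv => by
    simp only [List.zipWith_cons_cons]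
    rw [precL, precL]
    by_cases hab : a = 0 ∧ b = 0 <;> by_cases hab' : a' = 0 ∧ b' = 0
    · obtain ⟨rfl, rfl⟩ := hab
      obtain ⟨rfl, rfl⟩ := hab'
      have ih := precL_add_cases 0 c 0 c' r r' (by simpa using hlen) (by simpa using hu)
        (by simpa using hv)
      refine ih.imp (fun h => Or.inr (Or.inr ⟨rfl, h⟩))
        (Or.imp (fun h => h.cons_cons fun s t _ => by simp) fun h => Or.inr (Or.inr ⟨rfl, h⟩))
    · obtain ⟨rfl, rfl⟩ := hab
      simp [g2_eq_zero_iff, hab']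
    · obtain ⟨rfl, rfl⟩ := hab'
      simp [g2_eq_zero_iff, hab]
    · rcases lt_trichotomy (a * b') (a' * b) with h | h | h
      · exact Or.inl (Or.inr (Or.inl (g2_prec2_g2_add hab h)))
      · obtain ⟨g, g', p, q, hg, hpq, rfl, rfl, rfl, rfl⟩ := exists_coprime_of_mul_eq_mul hab h
        have hg' : g' ≠ 0 := by rintro rfl; simp at hab'
        have ih := precL_add_cases g c g' c' r r' (by simpa using hlen) ⟨g, by simp, hg⟩
          ⟨g', by simp, hg'⟩
        simp only [List.zipWith_cons_cons] at ih
        -- the gcds of proportional heads add up, so `ih` is about the recursive lists of `precL`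
        have hgcd : ∀ m, Nat.gcd (m * p) (m * q) = m := fun m => by
          rw [Nat.gcd_mul_left, hpq.gcd_eq_one, mul_one]
        have hg2 : ∀ m, m ≠ 0 → g2 (m * p) (m * q) = g2 p q := fun m hm => g2_mul_mul hm p q
        rw [← add_mul, ← add_mul, hgcd, hgcd, hgcd, hg2 g hg, hg2 g' hg', hg2 _ (by omega)]
        refine ih.imp (fun h => Or.inr (Or.inr ⟨rfl, h⟩))
          (Or.imp (fun h => h.cons_cons fun s t hst => ?_) fun h => Or.inr (Or.inr ⟨rfl, h⟩))
        constructor <;> rw [← mul_assoc, hst] <;> ring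
      · have h' := g2_prec2_g2_add (a' := a) (b' := b) hab' h
        rw [add_comm a', add_comm b'] at h'
        exact Or.inr (Or.inr (Or.inr (Or.inl h')))
  | _, _, _, _, [], _ :: _, hlen, _, _ | _, _, _, _, _ :: _, [], hlen, _, _ => by
    simp at hlen

theorem precL_of_precL_map_mul {t : ℕ} (ht : t ≠ 0) : ∀ (a b a' b' : ℕ) (r r' : List ℕ),
    r.length = r'.length → precL (a :: b :: r) ((a' :: b' :: r').map (t * ·)) →
      precL (a :: b :: r) (a' :: b' :: r')
  | a, b, a', b', [], [], _, h => by
    simp only [List.map_cons, List.map_nil] at h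
    rw [precL] at h ⊢
    rwa [← one_mul a, ← one_mul b, prec2_mul_mul_iff one_ne_zero ht] at h
  | a, b, a', b', c :: r, c' :: r', hlen, h => by
    simp only [List.map_cons] at h
    rw [precL, g2_mul_mul ht, Nat.gcd_mul_left] at h
    rw [precL]
    refine h.imp_right (Or.imp_right fun ⟨hg, h⟩ => ⟨hg, ?_⟩)
    exact precL_of_precL_map_mul ht _ _ _ _ r r' (by simpa using hlen) h
  | _, _, _, _, [], _ :: _, hlen, _ | _, _, _, _, _ :: _, [], hlen, _ => by
    simp at hlen

theorem precL_ofFn_add_cases {q : ℕ} (hq : 2 ≤ q) {μ ν : Fin q → ℕ} (hμ : μ ≠ 0) (hν : ν ≠ 0) :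
    precL (List.ofFn μ) (List.ofFn (μ + ν)) ∨ Proportional (List.ofFn μ) (List.ofFn (μ + ν)) ∨
      precL (List.ofFn ν) (List.ofFn (μ + ν)) := by
  have hzip : List.ofFn (μ + ν) = List.zipWith (· + ·) (List.ofFn μ) (List.ofFn ν) := by
    apply List.ext_getElem <;> simp
  have hu : ∃ x ∈ List.ofFn μ, x ≠ 0 := by simpa [Function.ne_iff] using hμ
  have hv : ∃ x ∈ List.ofFn ν, x ≠ 0 := by simpa [Function.ne_iff] using hν
  obtain ⟨n, rfl⟩ : ∃ n, q = n + 2 := ⟨q - 2, by omega⟩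
  rw [hzip]
  simp only [List.ofFn_succ] at hu hv ⊢
  exact precL_add_cases _ _ _ _ _ _ (by simp) hu hv

theorem precL_ofFn_of_precL_ofFn_smul {q : ℕ} (hq : 2 ≤ q) {t : ℕ} (ht : t ≠ 0) {μ ν : Fin q → ℕ}
    (h : precL (List.ofFn μ) (List.ofFn (t • ν))) : precL (List.ofFn μ) (List.ofFn ν) := by
  rw [show List.ofFn (t • ν) = (List.ofFn ν).map (t * ·) by rw [List.map_ofFn]; rfl] at h
  obtain ⟨n, rfl⟩ : ∃ n, q = n + 2 := ⟨q - 2, by omega⟩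
  simp only [List.ofFn_succ] at h ⊢
  exact precL_of_precL_map_mul ht _ _ _ _ _ _ (by simp) h

theorem eq_gcd_smul_of_mul_eq_mul {ι : Type*} [Fintype ι] {β γ : ι → ℕ}
    (hβ : Finset.univ.gcd β = 1) {s t : ℕ} (hs : s ≠ 0) (h : ∀ i, s * γ i = t * β i) :
    γ = Finset.univ.gcd γ • β := by
  have hst : s * Finset.univ.gcd γ = t := by
    have hgcd := Finset.gcd_mul_left (s := Finset.univ) (f := γ) (a := s)
    simp only [h, Finset.gcd_mul_left, hβ, normalize_eq, mul_one] at hgcd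
    exact hgcd.symm
  funext i
  refine Nat.eq_of_mul_eq_mul_left (Nat.pos_of_ne_zero hs) ?_
  rw [h, ← hst, Pi.smul_apply, smul_eq_mul, mul_assoc]

theorem precL_or_precL_of_le_smul {q : ℕ} (hq : 2 ≤ q) {β γ : Fin q → ℕ}
    (hβ : Finset.univ.gcd β = 1) {r : ℕ} (hle : γ ≤ r • β) (hγ : ∀ s : ℕ, s • β ≠ γ) :
    (γ ≠ 0 ∧ precL (List.ofFn γ) (List.ofFn β)) ∨
      (r • β - γ ≠ 0 ∧ precL (List.ofFn (r • β - γ)) (List.ofFn β)) := by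
  have hγ0 : γ ≠ 0 := by simpa [eq_comm] using hγ 0
  have hσ0 : r • β - γ ≠ 0 := fun h => hγ r (le_antisymm (tsub_eq_zero_iff_le.mp h) hle)
  have hr : r ≠ 0 := by
    rintro rfl
    exact hγ0 (le_antisymm (by simpa using hle) bot_le)
  have hcases := precL_ofFn_add_cases hq hγ0 hσ0
  rw [add_tsub_cancel_of_le hle] at hcases
  rcases hcases with h | ⟨s, t, hs, -, hst⟩ | h
  · exact Or.inl ⟨hγ0, precL_ofFn_of_precL_ofFn_smul hq hr h⟩
  · refine absurd (eq_gcd_smul_of_mul_eq_mul hβ hs (t := t * r) fun i => ?_).symm (hγ _)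
    simp only [List.map_ofFn, List.ofFn_inj] at hst
    simpa [mul_assoc] using congrFun hst i
  · exact Or.inr ⟨hσ0, precL_ofFn_of_precL_ofFn_smul hq hr h⟩

theorem sum_Iic_smul_eq_sum_range {ι M : Type*} [Fintype ι] [DecidableEq ι] [AddCommMonoid M]
    {β : ι → ℕ} (hβ : β ≠ 0) (r : ℕ) (F : (ι → ℕ) → M)
    (hF : ∀ γ ≤ r • β, (∀ s : ℕ, s • β ≠ γ) → F γ = 0) :
    ∑ γ ∈ Finset.Iic (r • β), F γ = ∑ s ∈ Finset.range (r + 1), F (s • β) := by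
  obtain ⟨i, hi⟩ := Function.ne_iff.mp hβ
  have hinj : Set.InjOn (· • β) (Finset.range (r + 1) : Set ℕ) := fun s _ s' _ h =>
    Nat.eq_of_mul_eq_mul_right (Nat.pos_of_ne_zero hi) (congrFun h i)
  rw [← Finset.sum_image hinj]
  refine (Finset.sum_subset ?_ fun γ hγ hγ' => hF γ (Finset.mem_Iic.mp hγ) fun s hs => ?_).symm
  · intro γ hγ
    obtain ⟨s, hs, rfl⟩ := Finset.mem_image.mp hγ
    exact Finset.mem_Iic.mpr (nsmul_le_nsmul_left bot_le (Finset.mem_range_succ_iff.mp hs))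
  · refine hγ' (Finset.mem_image.mpr ⟨s, Finset.mem_range_succ_iff.mpr ?_, hs⟩)
    have hle := Finset.mem_Iic.mp hγ i
    rw [← hs] at hle
    exact Nat.le_of_mul_le_mul_right hle (Nat.pos_of_ne_zero hi)

theorem diagonal_restriction_is_HS_general (q : ℕ) (hq : 2 ≤ q)
    (k A : Type*) [CommRing k] [CommRing A] [Algebra k A]
    (Δ : Set (Fin q → ℕ)) (hco : ∀ α' α : Fin q → ℕ, α' ≤ α → α ∈ Δ → α' ∈ Δ)
    (D : (Fin q → ℕ) → Module.End k A)
    (hD0 : D 0 = 1)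
    (hLeib : ∀ α ∈ Δ, ∀ x y : A,
      D α (x * y) = ∑ β ∈ Finset.Iic α, D β x * D (α - β) y)
    (β : Fin q → ℕ) (hβ0 : β ≠ 0) (hgcd : Finset.univ.gcd β = 1)
    (hvanish : ∀ γ ∈ Δ, γ ≠ 0 → precL (List.ofFn γ) (List.ofFn β) → D γ = 0) :
    D ((0 : ℕ) • β) = 1 ∧
      ∀ r : ℕ, r • β ∈ Δ → ∀ x y : A,
        D (r • β) (x * y) = ∑ s ∈ Finset.range (r + 1), D (s • β) x * D ((r - s) • β) y := by
  refine ⟨by rwa [zero_smul], fun r hr x y => ?_⟩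
  have hsub : ∀ s, (r - s) • β = r • β - s • β := fun s => by ext; simp [Nat.sub_mul]
  simp only [hsub]
  rw [hLeib _ hr, sum_Iic_smul_eq_sum_range hβ0 r fun γ => D γ x * D (r • β - γ) y]
  intro γ hle hγ
  rcases precL_or_precL_of_le_smul hq hgcd hle hγ with ⟨hγ0, h⟩ | ⟨hσ0, h⟩
  · rw [hvanish γ (hco _ _ hle hr) hγ0 h, LinearMap.zero_apply, zero_mul]
  · rw [hvanish _ (hco _ _ tsub_le_self hr) hσ0 h, LinearMap.zero_apply, mul_zero]

/-- If `D` is a `Δ`-variate Hasse–Schmidt derivation, `β ∈ Δ ∩ 𝒞^q`, and `D_γ = 0` for all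
nonzero `γ ∈ Δ` with `[γ] ≺ [β]`, then `E_r := D_{rβ}` is a Hasse–Schmidt derivation. -/
theorem diagonal_restriction_is_HS (q : ℕ) (hq : 2 ≤ q)
    (k A : Type*) [CommRing k] [CommRing A] [Algebra k A]
    (Δ : Set (Fin q → ℕ)) (hco : ∀ α' α : Fin q → ℕ, α' ≤ α → α ∈ Δ → α' ∈ Δ)
    (D : (Fin q → ℕ) → Module.End k A)
    (hD0 : D 0 = 1)
    (hLeib : ∀ α ∈ Δ, ∀ x y : A,
      D α (x * y) = ∑ β ∈ Finset.Iic α, D β x * D (α - β) y)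
    (β : Fin q → ℕ) (hβΔ : β ∈ Δ) (hβ0 : β ≠ 0) (hgcd : Finset.univ.gcd β = 1)
    (hvanish : ∀ γ ∈ Δ, γ ≠ 0 → precL (List.ofFn γ) (List.ofFn β) → D γ = 0) :
    D ((0 : ℕ) • β) = 1 ∧
      ∀ r : ℕ, r • β ∈ Δ → ∀ x y : A,
        D (r • β) (x * y) = ∑ s ∈ Finset.range (r + 1), D (s • β) x * D ((r - s) • β) y :=
  diagonal_restriction_is_HS_general q hq k A Δ hco D hD0 hLeib β hβ0 hgcd hvanish
end

section
/- Let D, E ∈ HS_k(A; m) be Hasse–Schmidt derivations of length m with D₁ = δ and E₁ = ε. Let F = (D ⊠ E) ∘ (D* ⊠ E*) be the 2-variate Hasse–Schmidt derivation indexed by {β ∈ ℕ² : β ≤ (m,m)}, where (D ⊠ E)_{(i,j)} = D_i ∘ E_j and D*, E* are the inverses of D, E in the Hasse–Schmidt group. Then F_{(0,1)} = 0, F_{(1,0)} = 0, and F_{(1,1)} = δ∘ε − ε∘δ. -/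
/-- A Hasse–Schmidt derivation of length `m`: `D₀ = id` and the Leibniz identities. -/
def IsHS {k A : Type*} [CommRing k] [CommRing A] [Algebra k A]
    (m : ℕ) (D : ℕ → Module.End k A) : Prop :=
  D 0 = 1 ∧ ∀ n, 1 ≤ n → n ≤ m → ∀ x y : A,
    D n (x * y) = ∑ i ∈ Finset.range (n + 1), D i x * D (n - i) y

/-- Composition: `(D ∘ E)_n = Σ_{i+j=n} D_i ∘ E_j`. -/
def hsComp {k A : Type*} [CommRing k] [CommRing A] [Algebra k A]
    (D E : ℕ → Module.End k A) : ℕ → Module.End k A :=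
  fun n => ∑ i ∈ Finset.range (n + 1), D i * E (n - i)

/-- The identity HS-derivation `(id, 0, 0, …)`. -/
def hsOne {k A : Type*} [CommRing k] [CommRing A] [Algebra k A] : ℕ → Module.End k A :=
  fun n => if n = 0 then 1 else 0

/-!
Only first-order terms enter: `D ∘ D* = id` in degree 1 forces `D*₁ = -δ`, and likewise
`E*₁ = -ε`. With these values the two summands of `F_{(0,1)}` (and of `F_{(1,0)}`) cancel,
and the four summands of `F_{(1,1)}` are `δε`, `-εδ`, `-δε`, `δε`.
-/

open Finset

/-- The `(p, q)` component of `(D ⊠ E) ∘ (D' ⊠ E')`. -/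
def extProdComp {R : Type*} [Ring R] (D E D' E' : ℕ → R) (p : ℕ × ℕ) : R :=
  ∑ a ∈ range (p.1 + 1), ∑ b ∈ range (p.2 + 1), D a * E b * D' (p.1 - a) * E' (p.2 - b)

section ExtProdComp

variable {R : Type*} [Ring R] {D E D' E' : ℕ → R}

theorem extProdComp_zero_one (hE : E 0 = 1) (hD' : D' 0 = 1) (hE' : E' 0 = 1)
    (hE₁ : E' 1 = -E 1) : extProdComp D E D' E' (0, 1) = 0 := by
  simp [extProdComp, sum_range_succ, hE, hD', hE', hE₁]

theorem extProdComp_one_zero (hD : D 0 = 1) (hE : E 0 = 1) (hD' : D' 0 = 1) (hE' : E' 0 = 1)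
    (hD₁ : D' 1 = -D 1) : extProdComp D E D' E' (1, 0) = 0 := by
  simp [extProdComp, sum_range_succ, hD, hE, hD', hE', hD₁]

theorem extProdComp_one_one (hD : D 0 = 1) (hE : E 0 = 1) (hD' : D' 0 = 1) (hE' : E' 0 = 1)
    (hD₁ : D' 1 = -D 1) (hE₁ : E' 1 = -E 1) :
    extProdComp D E D' E' (1, 1) = D 1 * E 1 - E 1 * D 1 := by
  simp only [extProdComp, sum_range_succ, range_zero, sum_empty, hD, hE, hD', hE', hD₁, hE₁]
  noncomm_ring

end ExtProdComp

theorem eq_neg_of_hsComp_one_eq_hsOne {k A : Type*} [CommRing k] [CommRing A] [Algebra k A]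
    {D D' : ℕ → Module.End k A} (hD : D 0 = 1) (hD' : D' 0 = 1)
    (h : hsComp D D' 1 = hsOne 1) : D' 1 = -D 1 := by
  have h : D' 1 + D 1 = 0 := by simpa [hsComp, hsOne, sum_range_succ, hD, hD', add_comm] using h
  exact eq_neg_of_add_eq_zero_left h

/-- For `F = (D ⊠ E) ∘ (D* ⊠ E*)` (a 2-variate HS-derivation on `{β ≤ (m,m)}`), one has
`F_{(0,1)} = 0`, `F_{(1,0)} = 0` and `F_{(1,1)} = δε − εδ`. -/
theorem commutator_two_variate (k A : Type*) [CommRing k] [CommRing A] [Algebra k A]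
    (m : ℕ) (hm : 1 ≤ m) (D E Ds Es : ℕ → Module.End k A) (δ ε : Module.End k A)
    (hD : IsHS m D) (hE : IsHS m E) (hDs : IsHS m Ds) (hEs : IsHS m Es)
    (hD1 : D 1 = δ) (hE1 : E 1 = ε)
    (hinvD : ∀ n ≤ m, hsComp D Ds n = hsOne n ∧ hsComp Ds D n = hsOne n)
    (hinvE : ∀ n ≤ m, hsComp E Es n = hsOne n ∧ hsComp Es E n = hsOne n) :
    letI F : ℕ × ℕ → Module.End k A := fun p =>
      ∑ a ∈ Finset.range (p.1 + 1), ∑ b ∈ Finset.range (p.2 + 1),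
        D a * E b * Ds (p.1 - a) * Es (p.2 - b)
    F (0, 1) = 0 ∧ F (1, 0) = 0 ∧ F (1, 1) = δ * ε - ε * δ := by
  show extProdComp D E Ds Es (0, 1) = 0 ∧ extProdComp D E Ds Es (1, 0) = 0 ∧
    extProdComp D E Ds Es (1, 1) = δ * ε - ε * δ
  have hDs1 : Ds 1 = -D 1 := eq_neg_of_hsComp_one_eq_hsOne hD.1 hDs.1 (hinvD 1 hm).1
  have hEs1 : Es 1 = -E 1 := eq_neg_of_hsComp_one_eq_hsOne hE.1 hEs.1 (hinvE 1 hm).1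
  subst hD1 hE1
  exact ⟨extProdComp_zero_one hE.1 hDs.1 hEs.1 hEs1,
    extProdComp_one_zero hD.1 hE.1 hDs.1 hEs.1 hDs1,
    extProdComp_one_one hD.1 hE.1 hDs.1 hEs.1 hDs1 hEs1⟩
end

section
/- Let k have prime characteristic p > 0 and let D ∈ HS_k(A; p^{α+1} − 1) be a Hasse–Schmidt derivation. Define E = D^p (p-fold composition in the Hasse–Schmidt group). Then E_n = 0 for all 1 ≤ n < p, and E_p = D₁^p (the p-th power of the endomorphism D₁). -/
/-- `j`-fold composition power in the Hasse–Schmidt group. -/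
def hsPow {k A : Type*} [CommRing k] [CommRing A] [Algebra k A]
    (D : ℕ → Module.End k A) : ℕ → ℕ → Module.End k A
  | 0 => hsOne
  | j + 1 => hsComp D (hsPow D j)

/-- Sum over compositions of `m` into exactly `r` positive parts of the ordered
products `D_{j₁} * ⋯ * D_{j_r}`. -/
def hsS {k A : Type*} [CommRing k] [CommRing A] [Algebra k A]
    (D : ℕ → Module.End k A) : ℕ → ℕ → Module.End k A
  | 0, m => if m = 0 then 1 else 0
  | r + 1, m => ∑ i ∈ Finset.range m, D (i + 1) * hsS D r (m - (i + 1))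

lemma hsS_eq_zero {k A : Type*} [CommRing k] [CommRing A] [Algebra k A]
    (D : ℕ → Module.End k A) : ∀ r m, m < r → hsS D r m = 0 := by
  intro r
  induction r with
  | zero => intro m h; omega
  | succ r ih =>
    intro m h
    rw [hsS]
    apply Finset.sum_eq_zero
    intro i hi
    rw [ih (m - (i + 1)) (by simp at hi; omega), mul_zero]

lemma hsS_diag {k A : Type*} [CommRing k] [CommRing A] [Algebra k A]
    (D : ℕ → Module.End k A) : ∀ r, hsS D r r = D 1 ^ r := by
  intro r
  induction r with
  | zero => simp [hsS]
  | succ r ih =>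
    rw [hsS]
    rw [Finset.sum_eq_single 0]
    · simp [ih, pow_succ']
    · intro i hi hne
      rw [hsS_eq_zero D r (r + 1 - (i + 1)) (by simp at hi; omega), mul_zero]
    · simp

lemma hsS_sum_ext {k A : Type*} [CommRing k] [CommRing A] [Algebra k A]
    (D : ℕ → Module.End k A) (j t N : ℕ) (h : t ≤ N) :
    ∑ r ∈ Finset.range (t + 1), (j.choose r) • hsS D r t
      = ∑ r ∈ Finset.range (N + 1), (j.choose r) • hsS D r t := by
  apply Finset.sum_subset (Finset.range_subset_range.mpr (by omega))
  intro r _ hr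
  simp only [Finset.mem_range, not_lt] at hr
  rw [hsS_eq_zero D r t (by omega), smul_zero]

lemma hsPow_formula {k A : Type*} [CommRing k] [CommRing A] [Algebra k A]
    (D : ℕ → Module.End k A) (hD0 : D 0 = 1) :
    ∀ j m, hsPow D j m = ∑ r ∈ Finset.range (m + 1), (j.choose r) • hsS D r m := by
  intro j
  induction j with
  | zero =>
    intro m
    rw [Finset.sum_eq_single 0]
    · cases m with
      | zero => simp [hsPow, hsOne, hsS]
      | succ m => simp [hsPow, hsOne, hsS]
    · intro r hr hne
      cases r with
      | zero => exact absurd rfl hne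
      | succ r => simp
    · simp
  | succ j ih =>
    intro m
    show hsComp D (hsPow D j) m = _
    rw [hsComp]
    rw [Finset.sum_range_succ']
    simp only [Nat.sub_zero, hD0, one_mul]
    rw [ih m]
    have h1 : ∀ i ∈ Finset.range m,
        D (i + 1) * hsPow D j (m - (i + 1))
          = ∑ r ∈ Finset.range (m + 1), (j.choose r) • (D (i + 1) * hsS D r (m - (i + 1))) := by
      intro i hi
      simp only [Finset.mem_range] at hi
      rw [ih, hsS_sum_ext D j (m - (i + 1)) m (by omega), Finset.mul_sum]
      exact Finset.sum_congr rfl fun r _ => (mul_smul_comm _ _ _)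
    rw [Finset.sum_congr rfl h1, Finset.sum_comm]
    have h2 : ∀ r ∈ Finset.range (m + 1),
        ∑ i ∈ Finset.range m, (j.choose r) • (D (i + 1) * hsS D r (m - (i + 1)))
          = (j.choose r) • hsS D (r + 1) m := by
      intro r _
      rw [← Finset.smul_sum, hsS]
    rw [Finset.sum_congr rfl h2]
    -- Now: ∑_{r∈range(m+1)} C(j,r)•S(r+1)m + ∑_{r∈range(m+1)} C(j,r)•S r m
    --    = ∑_{r∈range(m+1)} C(j+1,r)•S r m
    rw [Finset.sum_range_succ (fun r => (j.choose r) • hsS D (r + 1) m),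
        hsS_eq_zero D (m + 1) m (by omega), smul_zero, add_zero]
    conv_rhs => rw [Finset.sum_range_succ' (fun r => ((j + 1).choose r) • hsS D r m)]
    conv_lhs => rw [Finset.sum_range_succ' (fun r => (j.choose r) • hsS D r m)]
    simp only [Nat.choose_succ_succ, Nat.choose_zero_right, add_smul]
    rw [Finset.sum_add_distrib]
    abel

/-- In characteristic `p`, for `D ∈ HS_k(A; p^{α+1} − 1)` and `E = D^p`, one has
`E_n = 0` for `1 ≤ n < p` and `E_p = D₁^p`. -/
theorem hs_p_power (k A : Type*) [CommRing k] [CommRing A] [Algebra k A]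
    (p : ℕ) [Fact p.Prime] [CharP k p] (α : ℕ) (hα : 1 ≤ α)
    (D : ℕ → Module.End k A) (hD : IsHS (p ^ (α + 1) - 1) D) :
    (∀ n, 1 ≤ n → n < p → hsPow D p n = 0) ∧ hsPow D p p = D 1 ^ p := by
  have hp : p.Prime := Fact.out
  have hsmul : ∀ (c : ℕ), p ∣ c → ∀ x : Module.End k A, c • x = 0 := by
    rintro c ⟨d, rfl⟩ x
    rw [mul_smul, ← Nat.cast_smul_eq_nsmul k p, CharP.cast_eq_zero, zero_smul]
  constructor
  · intro n hn1 hnp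
    rw [hsPow_formula D hD.1 p n]
    apply Finset.sum_eq_zero
    intro r hr
    simp only [Finset.mem_range] at hr
    rcases Nat.eq_zero_or_pos r with rfl | hr1
    · rw [show hsS D 0 n = 0 from by rw [hsS, if_neg (by omega)], smul_zero]
    · exact hsmul _ (hp.dvd_choose_self (by omega) (by omega)) _
  · rw [hsPow_formula D hD.1 p p]
    rw [Finset.sum_eq_single p]
    · rw [Nat.choose_self, one_smul, hsS_diag]
    · intro r hr hne
      simp only [Finset.mem_range] at hr
      rcases Nat.eq_zero_or_pos r with rfl | hr1
      · rw [show hsS D 0 p = 0 from by rw [hsS, if_neg (by omega)], smul_zero]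
      · exact hsmul _ (hp.dvd_choose_self (by omega) (by omega)) _
    · simp
end

section
/- For Hasse–Schmidt derivations D ∈ HS_k(A; m) and D' ∈ HS_k(A; n) with m, n ≥ 1, the differential operator [D_m, D'_n] − D_{m−1} ∘ D'_{n−1} ∘ [D₁, D'₁] has order at most m + n − 2. -/
/-- Differential operators of order `≤ d`, defined inductively: order `≤ 0` means
`A`-linear, and `P` has order `≤ d+1` iff `[P, a]` has order `≤ d` for every `a ∈ A`. -/
def IsDiffOpOfOrder {k A : Type*} [CommRing k] [CommRing A] [Algebra k A] :
    ℕ → Module.End k A → Prop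
  | 0, P => ∀ a x : A, P (a * x) = a * P x
  | d + 1, P => ∀ a : A,
      IsDiffOpOfOrder d (P * (LinearMap.mulLeft k a : Module.End k A) -
        (LinearMap.mulLeft k a : Module.End k A) * P)

/-!
Write `μ a` for multiplication by `a` and `E m n` for the operator of the theorem. Bounding
orders strictly, with "order `< 0`" meaning `= 0`, makes the calculus of the order filtration
uniform: if `P, Q` have orders `< p, < q`, then `P * Q` has order `< p + q - 1` and `⁅P, Q⁆` order
`< p + q - 2`, with no exceptional cases. The Hasse–Schmidt rule gives
`⁅D i, μ a⁆ = μ (D 1 a) * D (i - 1)` up to order `< i - 1`, and `⁅D 1, D' 1⁆` is a derivation.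
Expanding `⁅E m n, μ a⁆` with these facts, everything except
`μ (D 1 a) * E (m - 1) n + μ (D' 1 a) * E m (n - 1)` has order `< m + n - 2`, where the first
(second) summand is to be read as `0` when `m = 1` (`n = 1`); induction on `m + n` concludes.
-/

open LinearMap (mulLeft)
open Finset

theorem Ring.mul_lie {R : Type*} [Ring R] (x y z : R) :
    ⁅x * y, z⁆ = x * ⁅y, z⁆ + ⁅x, z⁆ * y := by
  simp only [Ring.lie_def]; noncomm_ring

section

attribute [local instance] LieRing.ofAssociativeRing

variable {k A : Type*} [CommRing k] [CommRing A] [Algebra k A]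

def IsDiffOpOfOrderLT : ℕ → Module.End k A → Prop
  | 0, P => P = 0
  | d + 1, P => IsDiffOpOfOrder d P

theorem isDiffOpOfOrderLT_succ_iff {d : ℕ} {P : Module.End k A} :
    IsDiffOpOfOrderLT (d + 1) P ↔ ∀ a : A, IsDiffOpOfOrderLT d ⁅P, mulLeft k a⁆ := by
  cases d with
  | zero =>
    simp only [IsDiffOpOfOrderLT, IsDiffOpOfOrder, Ring.lie_def, sub_eq_zero, LinearMap.ext_iff]
    rfl
  | succ d => rfl

theorem isDiffOpOfOrderLT_zero (d : ℕ) : IsDiffOpOfOrderLT d (0 : Module.End k A) := by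
  induction d with
  | zero => rfl
  | succ d ih => exact isDiffOpOfOrderLT_succ_iff.2 fun a => by rwa [zero_lie]

theorem IsDiffOpOfOrderLT.add {d : ℕ} {P Q : Module.End k A} (hP : IsDiffOpOfOrderLT d P)
    (hQ : IsDiffOpOfOrderLT d Q) : IsDiffOpOfOrderLT d (P + Q) := by
  induction d generalizing P Q with
  | zero => change P + Q = 0; rw [show P = 0 from hP, show Q = 0 from hQ, add_zero]
  | succ d ih =>
    exact isDiffOpOfOrderLT_succ_iff.2 fun a => by
      rw [add_lie]
      exact ih (isDiffOpOfOrderLT_succ_iff.1 hP a) (isDiffOpOfOrderLT_succ_iff.1 hQ a)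

theorem IsDiffOpOfOrderLT.neg {d : ℕ} {P : Module.End k A} (hP : IsDiffOpOfOrderLT d P) :
    IsDiffOpOfOrderLT d (-P) := by
  induction d generalizing P with
  | zero => change -P = 0; rw [show P = 0 from hP, neg_zero]
  | succ d ih =>
    exact isDiffOpOfOrderLT_succ_iff.2 fun a => by
      rw [neg_lie]
      exact ih (isDiffOpOfOrderLT_succ_iff.1 hP a)

theorem IsDiffOpOfOrderLT.sub {d : ℕ} {P Q : Module.End k A} (hP : IsDiffOpOfOrderLT d P)
    (hQ : IsDiffOpOfOrderLT d Q) : IsDiffOpOfOrderLT d (P - Q) := by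
  simpa only [sub_eq_add_neg] using hP.add hQ.neg

theorem isDiffOpOfOrderLT_sum {d : ℕ} {ι : Type*} (s : Finset ι) {f : ι → Module.End k A}
    (h : ∀ i ∈ s, IsDiffOpOfOrderLT d (f i)) : IsDiffOpOfOrderLT d (∑ i ∈ s, f i) :=
  Finset.sum_induction f _ (fun _ _ => .add) (isDiffOpOfOrderLT_zero d) h

theorem IsDiffOpOfOrderLT.mono {d e : ℕ} {P : Module.End k A} (hP : IsDiffOpOfOrderLT d P)
    (hde : d ≤ e) : IsDiffOpOfOrderLT e P := by
  induction d generalizing e P with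
  | zero => rw [show P = 0 from hP]; exact isDiffOpOfOrderLT_zero e
  | succ d ih =>
    obtain ⟨e, rfl⟩ : ∃ e', e = e' + 1 := ⟨e - 1, by omega⟩
    exact isDiffOpOfOrderLT_succ_iff.2 fun a =>
      ih (isDiffOpOfOrderLT_succ_iff.1 hP a) (by omega)

theorem isDiffOpOfOrderLT_one_mulLeft (b : A) :
    IsDiffOpOfOrderLT 1 (mulLeft k b : Module.End k A) :=
  isDiffOpOfOrderLT_succ_iff.2 fun a => by
    show ⁅mulLeft k b, mulLeft k a⁆ = 0
    ext x
    simp [Ring.lie_def, mul_left_comm]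

theorem IsDiffOpOfOrderLT.eq_mulLeft {P : Module.End k A} (hP : IsDiffOpOfOrderLT 1 P) :
    P = mulLeft k (P 1) := by
  ext x
  have h := LinearMap.congr_fun (isDiffOpOfOrderLT_succ_iff.1 hP x) 1
  simp only [Ring.lie_def, LinearMap.sub_apply, Module.End.mul_apply, LinearMap.mulLeft_apply,
    mul_one, LinearMap.zero_apply, sub_eq_zero] at h
  simpa [mul_comm] using h

theorem IsDiffOpOfOrderLT.mul {p q : ℕ} {X Y : Module.End k A} (hX : IsDiffOpOfOrderLT p X)
    (hY : IsDiffOpOfOrderLT q Y) : IsDiffOpOfOrderLT (p + q - 1) (X * Y) := by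
  match p, q, hX, hY with
  | 0, _, hX, _ => rw [show X = 0 from hX, zero_mul]; exact isDiffOpOfOrderLT_zero _
  | _, 0, _, hY => rw [show Y = 0 from hY, mul_zero]; exact isDiffOpOfOrderLT_zero _
  | p + 1, q + 1, hX, hY =>
    rw [show p + 1 + (q + 1) - 1 = p + q + 1 by omega]
    refine isDiffOpOfOrderLT_succ_iff.2 fun a => ?_
    rw [Ring.mul_lie]
    exact ((hX.mul (isDiffOpOfOrderLT_succ_iff.1 hY a)).mono (e := p + q) (by omega)).add
      (((isDiffOpOfOrderLT_succ_iff.1 hX a).mul hY).mono (by omega))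
termination_by p + q

theorem IsDiffOpOfOrderLT.lie {p q : ℕ} {X Y : Module.End k A} (hX : IsDiffOpOfOrderLT p X)
    (hY : IsDiffOpOfOrderLT q Y) : IsDiffOpOfOrderLT (p + q - 2) ⁅X, Y⁆ := by
  match p, q, hX, hY with
  | 0, _, hX, _ => rw [show X = 0 from hX, zero_lie]; exact isDiffOpOfOrderLT_zero _
  | _, 0, _, hY => rw [show Y = 0 from hY, lie_zero]; exact isDiffOpOfOrderLT_zero _
  | p + 1, q + 1, hX, hY =>
    rcases Nat.eq_zero_or_pos (p + q) with h | h
    · obtain ⟨rfl, rfl⟩ : p = 0 ∧ q = 0 := by omega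
      rw [hY.eq_mulLeft]
      exact isDiffOpOfOrderLT_succ_iff.1 hX (Y 1)
    rw [show p + 1 + (q + 1) - 2 = p + q - 1 + 1 by omega]
    refine isDiffOpOfOrderLT_succ_iff.2 fun a => ?_
    rw [lie_lie]
    exact ((hX.lie (isDiffOpOfOrderLT_succ_iff.1 hY a)).mono (e := p + q - 1) (by omega)).sub
      ((hY.lie (isDiffOpOfOrderLT_succ_iff.1 hX a)).mono (e := p + q - 1) (by omega))
termination_by p + q

namespace IsHS

variable {m n : ℕ} {D D' : ℕ → Module.End k A}

theorem mono (hD : IsHS m D) {m' : ℕ} (h : m' ≤ m) : IsHS m' D :=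
  ⟨hD.1, fun i h1 h2 => hD.2 i h1 (h2.trans h)⟩

theorem lie_mulLeft (hD : IsHS m D) {i : ℕ} (hi : i ≤ m) (a : A) :
    ⁅D i, mulLeft k a⁆ = ∑ j ∈ range i, mulLeft k (D (j + 1) a) * D (i - (j + 1)) := by
  rcases Nat.eq_zero_or_pos i with rfl | h1
  · simp [hD.1, Ring.lie_def]
  ext x
  simp only [Ring.lie_def, LinearMap.sub_apply, Module.End.mul_apply, LinearMap.mulLeft_apply,
    LinearMap.sum_apply]
  rw [hD.2 i h1 hi a x, sum_range_succ', hD.1]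
  simp

theorem lie_mulLeft_one (hD : IsHS m D) (hm : 1 ≤ m) (a : A) :
    ⁅D 1, mulLeft k a⁆ = mulLeft k (D 1 a) := by
  simp [hD.lie_mulLeft hm, hD.1]

theorem isDiffOpOfOrderLT (hD : IsHS m D) {i : ℕ} (hi : i ≤ m) :
    IsDiffOpOfOrderLT (i + 1) (D i) := by
  induction i using Nat.strong_induction_on with
  | _ i ih =>
    refine isDiffOpOfOrderLT_succ_iff.2 fun a => ?_
    rw [hD.lie_mulLeft hi]
    refine isDiffOpOfOrderLT_sum _ fun j hj => ?_
    have hj : j < i := mem_range.1 hj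
    exact ((isDiffOpOfOrderLT_one_mulLeft _).mul (ih (i - (j + 1)) (by omega) (by omega))).mono
      (by omega)

theorem lie_mulLeft_sub_isDiffOpOfOrderLT (hD : IsHS m D) {i : ℕ} (h1 : 1 ≤ i) (hi : i ≤ m)
    (a : A) :
    IsDiffOpOfOrderLT (i - 1) (⁅D i, mulLeft k a⁆ - mulLeft k (D 1 a) * D (i - 1)) := by
  obtain ⟨i, rfl⟩ : ∃ i', i = i' + 1 := ⟨i - 1, by omega⟩
  rw [hD.lie_mulLeft hi, sum_range_succ', add_sub_cancel_right]
  refine isDiffOpOfOrderLT_sum _ fun j hj => ?_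
  have hj : j < i := mem_range.1 hj
  exact ((isDiffOpOfOrderLT_one_mulLeft _).mul (hD.isDiffOpOfOrderLT (i := i + 1 - (j + 1 + 1))
    (by omega))).mono (by omega)

theorem lie_lie_mulLeft (hD : IsHS m D) (hD' : IsHS n D') (hm : 1 ≤ m) (hn : 1 ≤ n) (a : A) :
    ⁅⁅D 1, D' 1⁆, mulLeft k a⁆ = mulLeft k (⁅D 1, D' 1⁆ a) := by
  simp only [lie_lie, hD.lie_mulLeft_one hm, hD'.lie_mulLeft_one hn]
  ext x
  simp only [LinearMap.sub_apply, LinearMap.mulLeft_apply, Ring.lie_def, Module.End.mul_apply]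
  ring

end IsHS

section Defect

variable {m n : ℕ} {D D' : ℕ → Module.End k A}

def commutatorDefect (D D' : ℕ → Module.End k A) (m n : ℕ) : Module.End k A :=
  ⁅D m, D' n⁆ - D (m - 1) * D' (n - 1) * ⁅D 1, D' 1⁆

/-- The terms of `⁅commutatorDefect D D' m n, mulLeft k a⁆` with leading coefficient `D 1 a`. -/
def defectLeftTerm (D D' : ℕ → Module.End k A) (m n : ℕ) (a : A) : Module.End k A :=
  mulLeft k (D 1 a) * ⁅D (m - 1), D' n⁆ - ⁅D (m - 1), mulLeft k a⁆ * D' (n - 1) * ⁅D 1, D' 1⁆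

/-- The terms of `⁅commutatorDefect D D' m n, mulLeft k a⁆` with leading coefficient `D' 1 a`. -/
def defectRightTerm (D D' : ℕ → Module.End k A) (m n : ℕ) (a : A) : Module.End k A :=
  mulLeft k (D' 1 a) * ⁅D m, D' (n - 1)⁆ - D (m - 1) * ⁅D' (n - 1), mulLeft k a⁆ * ⁅D 1, D' 1⁆

theorem lie_commutatorDefect_mulLeft_sub_isDiffOpOfOrderLT (hD : IsHS m D) (hD' : IsHS n D')
    (hm : 1 ≤ m) (hn : 1 ≤ n) (a : A) :
    IsDiffOpOfOrderLT (m + n - 2) (⁅commutatorDefect D D' m n, mulLeft k a⁆ -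
      defectLeftTerm D D' m n a - defectRightTerm D D' m n a) := by
  rw [commutatorDefect, defectLeftTerm, defectRightTerm]
  set C := ⁅D 1, D' 1⁆ with hCdef
  set R : A → Module.End k A := fun x => ⁅D m, mulLeft k x⁆ - mulLeft k (D 1 x) * D (m - 1)
  set R' : A → Module.End k A := fun x => ⁅D' n, mulLeft k x⁆ - mulLeft k (D' 1 x) * D' (n - 1)
  have hC : ⁅C, mulLeft k a⁆ = mulLeft k (C a) := hD.lie_lie_mulLeft hD' hm hn a
  have hμ : (mulLeft k (D 1 (D' 1 a)) : Module.End k A) =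
      mulLeft k (C a) + mulLeft k (D' 1 (D 1 a)) := by
    ext x; simp [hCdef, Ring.lie_def, sub_mul]
  -- By `hμ`, the cross terms `μ (D 1 (D' 1 a)) * D (m - 1) * D' (n - 1)` and
  -- `μ (D' 1 (D 1 a)) * D' (n - 1) * D (m - 1)` combine into `μ (C a) * D (m - 1) * D' (n - 1)`,
  -- which cancels against the `⁅C, μ a⁆` coming from the defect's correction term.
  have key : ⁅⁅D m, D' n⁆ - D (m - 1) * D' (n - 1) * C, mulLeft k a⁆ -
      (mulLeft k (D 1 a) * ⁅D (m - 1), D' n⁆ - ⁅D (m - 1), mulLeft k a⁆ * D' (n - 1) * C) -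
      (mulLeft k (D' 1 a) * ⁅D m, D' (n - 1)⁆ - D (m - 1) * ⁅D' (n - 1), mulLeft k a⁆ * C) =
      ⁅R a, D' n⁆ + ⁅D m, R' a⁆ - R' (D 1 a) * D (m - 1) + R (D' 1 a) * D' (n - 1) -
        ⁅D (m - 1) * D' (n - 1), mulLeft k (C a)⁆ -
        mulLeft k (D' 1 (D 1 a)) * ⁅D' (n - 1), D (m - 1)⁆ := by
    simp only [R, R', sub_lie, Ring.mul_lie, hC, hμ]
    simp only [Ring.lie_def]
    noncomm_ring
  rw [key]
  have hR := fun x => hD.lie_mulLeft_sub_isDiffOpOfOrderLT hm le_rfl x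
  have hR' := fun x => hD'.lie_mulLeft_sub_isDiffOpOfOrderLT hn le_rfl x
  have hP := hD.isDiffOpOfOrderLT le_rfl
  have hQ := hD'.isDiffOpOfOrderLT le_rfl
  have hp := (hD.isDiffOpOfOrderLT (i := m - 1) (by omega)).mono (e := m) (by omega)
  have hq := (hD'.isDiffOpOfOrderLT (i := n - 1) (by omega)).mono (e := n) (by omega)
  refine .sub (.sub (.add (.sub (.add ?_ ?_) ?_) ?_) ?_) ?_
  · exact ((hR a).lie hQ).mono (by omega)
  · exact (hP.lie (hR' a)).mono (by omega)
  · exact ((hR' _).mul hp).mono (by omega)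
  · exact ((hR _).mul hq).mono (by omega)
  · exact ((hp.mul hq).lie (isDiffOpOfOrderLT_one_mulLeft _)).mono (by omega)
  · exact ((isDiffOpOfOrderLT_one_mulLeft _).mul (hq.lie hp)).mono (by omega)

theorem defectLeftTerm_isDiffOpOfOrderLT (hD : IsHS m D) (hD' : IsHS n D') (hn : 1 ≤ n)
    (ih : 2 ≤ m → IsDiffOpOfOrderLT (m - 1 + n - 1) (commutatorDefect D D' (m - 1) n)) (a : A) :
    IsDiffOpOfOrderLT (m + n - 2) (defectLeftTerm D D' m n a) := by
  obtain hm | hm : m ≤ 1 ∨ 2 ≤ m := by omega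
  · simp only [defectLeftTerm, Nat.sub_eq_zero_of_le hm, hD.1, Ring.lie_def, one_mul, mul_one,
      sub_self, mul_zero, zero_mul]
    exact isDiffOpOfOrderLT_zero _
  have hR := (hD.mono (m.sub_le 1)).lie_mulLeft_sub_isDiffOpOfOrderLT (i := m - 1) (by omega)
    le_rfl a
  have hq := hD'.isDiffOpOfOrderLT (i := n - 1) (by omega)
  have hC := (hD.isDiffOpOfOrderLT (i := 1) (by omega)).lie (hD'.isDiffOpOfOrderLT hn)
  have e : defectLeftTerm D D' m n a =
      mulLeft k (D 1 a) * commutatorDefect D D' (m - 1) n -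
      (⁅D (m - 1), mulLeft k a⁆ - mulLeft k (D 1 a) * D (m - 1 - 1)) * D' (n - 1) *
        ⁅D 1, D' 1⁆ := by
    rw [defectLeftTerm, commutatorDefect]; noncomm_ring
  rw [e]
  refine .sub ?_ ?_
  · exact ((isDiffOpOfOrderLT_one_mulLeft _).mul (ih hm)).mono (by omega)
  · exact ((hR.mul hq).mul hC).mono (by omega)

theorem defectRightTerm_isDiffOpOfOrderLT (hD : IsHS m D) (hD' : IsHS n D') (hm : 1 ≤ m)
    (ih : 2 ≤ n → IsDiffOpOfOrderLT (m + (n - 1) - 1) (commutatorDefect D D' m (n - 1)))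
    (a : A) : IsDiffOpOfOrderLT (m + n - 2) (defectRightTerm D D' m n a) := by
  obtain hn | hn : n ≤ 1 ∨ 2 ≤ n := by omega
  · simp only [defectRightTerm, Nat.sub_eq_zero_of_le hn, hD'.1, Ring.lie_def, one_mul, mul_one,
      sub_self, mul_zero, zero_mul]
    exact isDiffOpOfOrderLT_zero _
  have hR' := (hD'.mono (n.sub_le 1)).lie_mulLeft_sub_isDiffOpOfOrderLT (i := n - 1)
    (by omega) le_rfl a
  have hp := hD.isDiffOpOfOrderLT (i := m - 1) (by omega)
  have hq' := hD'.isDiffOpOfOrderLT (i := n - 1 - 1) (by omega)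
  have hC := (hD.isDiffOpOfOrderLT hm).lie (hD'.isDiffOpOfOrderLT (i := 1) (by omega))
  have e : defectRightTerm D D' m n a =
      mulLeft k (D' 1 a) * commutatorDefect D D' m (n - 1) -
      D (m - 1) * (⁅D' (n - 1), mulLeft k a⁆ - mulLeft k (D' 1 a) * D' (n - 1 - 1)) *
        ⁅D 1, D' 1⁆ -
      ⁅D (m - 1), mulLeft k (D' 1 a)⁆ * D' (n - 1 - 1) * ⁅D 1, D' 1⁆ := by
    rw [defectRightTerm, commutatorDefect]; simp only [Ring.lie_def]; noncomm_ring
  rw [e]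
  refine .sub (.sub ?_ ?_) ?_
  · exact ((isDiffOpOfOrderLT_one_mulLeft _).mul (ih hn)).mono (by omega)
  · exact ((hp.mul hR').mul hC).mono (by omega)
  · exact (((hp.lie (isDiffOpOfOrderLT_one_mulLeft _)).mul hq').mul hC).mono (by omega)

theorem commutatorDefect_isDiffOpOfOrderLT {m n : ℕ} (hD : IsHS m D) (hD' : IsHS n D')
    (hm : 1 ≤ m) (hn : 1 ≤ n) :
    IsDiffOpOfOrderLT (m + n - 1) (commutatorDefect D D' m n) := by
  rw [show m + n - 1 = m + n - 2 + 1 by omega, isDiffOpOfOrderLT_succ_iff]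
  intro a
  have hleft := defectLeftTerm_isDiffOpOfOrderLT hD hD' hn
    (fun _ => commutatorDefect_isDiffOpOfOrderLT (hD.mono (m.sub_le 1)) hD' (by omega) hn) a
  have hright := defectRightTerm_isDiffOpOfOrderLT hD hD' hm
    (fun _ => commutatorDefect_isDiffOpOfOrderLT hD (hD'.mono (n.sub_le 1)) hm (by omega)) a
  have hrest := lie_commutatorDefect_mulLeft_sub_isDiffOpOfOrderLT hD hD' hm hn a
  convert (hrest.add hleft).add hright using 1
  abel
termination_by m + n

end Defect

end

/-- For HS-derivations `D` of length `m` and `D'` of length `n`, the operator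
`[D_m, D'_n] − D_{m−1} ∘ D'_{n−1} ∘ [D₁, D'₁]` has order `≤ m + n − 2`. -/
theorem commutator_order (k A : Type*) [CommRing k] [CommRing A] [Algebra k A]
    (m n : ℕ) (hm : 1 ≤ m) (hn : 1 ≤ n)
    (D D' : ℕ → Module.End k A) (hD : IsHS m D) (hD' : IsHS n D') :
    IsDiffOpOfOrder (m + n - 2)
      ((D m * D' n - D' n * D m) -
        D (m - 1) * D' (n - 1) * (D 1 * D' 1 - D' 1 * D 1)) := by
  have h := commutatorDefect_isDiffOpOfOrderLT hD hD' hm hn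
  rw [show m + n - 1 = m + n - 2 + 1 by omega] at h
  exact h
end

section
/- Let k be a commutative ring, A a commutative k-algebra, and Δ ⊆ ℕ^p, ∇ ⊆ ℕ^q non-empty co-ideals. Let φ : A⟦s⟧_Δ → A⟦t⟧_∇ be a monomial substitution map, i.e. an A-algebra homomorphism with φ(s_i) = t^{β^i} for fixed β^i ∈ ℕ^q_+ (so φ(s_i) lies in the ideal generated by t₁,...,t_q and φ has constant coefficients), and let D = (D_α)_{α∈Δ} be a Δ-variate Hasse–Schmidt derivation of A over k. Then the family E defined by Σ_{β∈∇} E_β t^β = Σ_{α∈Δ} φ(s^α) D_α is a ∇-variate Hasse–Schmidt derivation of A over k. -/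
open scoped Classical

/-- The action of a monomial substitution map `φ(s_i) = t^{β^i}` on a `Δ`-variate
Hasse–Schmidt derivation produces a `∇`-variate Hasse–Schmidt derivation:
`E_γ = Σ_{α : Σ_i α_i β^i = γ} D_α` satisfies `E₀ = id` and the Leibniz identities. -/
theorem monomial_substitution_HS (k A : Type*) [CommRing k] [CommRing A] [Algebra k A]
    (p q : ℕ) (hp : 1 ≤ p) (hq : 1 ≤ q)
    (Δ : Set (Fin p → ℕ)) (Nb : Set (Fin q → ℕ))
    (hΔne : Δ.Nonempty) (hNbne : Nb.Nonempty)
    (hcoΔ : ∀ α' α : Fin p → ℕ, α' ≤ α → α ∈ Δ → α' ∈ Δ)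
    (hcoNb : ∀ γ' γ : Fin q → ℕ, γ' ≤ γ → γ ∈ Nb → γ' ∈ Nb)
    (D : (Fin p → ℕ) → Module.End k A) (hD0 : D 0 = 1)
    (hLeib : ∀ α ∈ Δ, ∀ x y : A,
      D α (x * y) = ∑ β ∈ Finset.Iic α, D β x * D (α - β) y)
    (B : Fin p → Fin q → ℕ) (hB : ∀ i, B i ≠ 0)
    (hcompat : ∀ α : Fin p → ℕ, (∑ i, α i • B i) ∈ Nb → α ∈ Δ) :
    letI E : (Fin q → ℕ) → Module.End k A := fun γ =>
      ∑ α ∈ (Finset.Iic (fun _ : Fin p => ∑ j, γ j)).filter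
          (fun α => (∑ i, α i • B i) = γ), D α
    E 0 = 1 ∧ ∀ γ ∈ Nb, ∀ x y : A,
      E γ (x * y) = ∑ β ∈ Finset.Iic γ, E β x * E (γ - β) y := by
  show (∑ α ∈ _, D α) = 1 ∧ _
  -- the index set of `E δ`
  set S : (Fin q → ℕ) → Finset (Fin p → ℕ) := fun δ =>
    (Finset.Iic (fun _ : Fin p => ∑ j, δ j)).filter (fun α => (∑ i, α i • B i) = δ)
    with hS
  -- key bound: if ∑ i, β i • B i = δ then each β i ≤ ∑ j, δ j
  have key : ∀ (δ : Fin q → ℕ) (β : Fin p → ℕ), (∑ i, β i • B i) = δ → ∀ i, β i ≤ ∑ j, δ j := by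
    intro δ β hβ i
    have hB1 : ∀ i' : Fin p, 1 ≤ ∑ j, B i' j := by
      intro i'
      rcases Nat.eq_zero_or_pos (∑ j, B i' j) with h | h
      · exact absurd (funext fun j => (Finset.sum_eq_zero_iff.mp h) j (Finset.mem_univ j))
          (hB i')
      · exact h
    calc β i ≤ ∑ i', β i' :=
          Finset.single_le_sum (fun _ _ => Nat.zero_le _) (Finset.mem_univ i)
      _ ≤ ∑ i', β i' * ∑ j, B i' j :=
          Finset.sum_le_sum fun i' _ => Nat.le_mul_of_pos_right _ (hB1 i')
      _ = ∑ j, δ j := by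
          subst hβ
          simp only [Finset.sum_apply, Pi.smul_apply, smul_eq_mul, Finset.mul_sum]
          exact Finset.sum_comm
  have hmemS : ∀ (δ : Fin q → ℕ) (β : Fin p → ℕ), (∑ i, β i • B i) = δ → β ∈ S δ := by
    intro δ β hβ
    exact Finset.mem_filter.mpr ⟨Finset.mem_Iic.mpr fun i => key δ β hβ i, hβ⟩
  constructor
  · -- E 0 = 1
    show (∑ α ∈ S 0, D α) = 1
    have h0 : S 0 = {0} := by
      ext α
      simp only [hS, Finset.mem_filter, Finset.mem_Iic, Finset.mem_singleton]
      constructor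
      · rintro ⟨h1, -⟩
        refine le_antisymm (fun i => ?_) zero_le
        simpa using h1 i
      · rintro rfl
        simp
    rw [h0, Finset.sum_singleton, hD0]
  · show ∀ γ ∈ Nb, ∀ x y : A,
      (∑ α ∈ S γ, D α) (x * y) =
        ∑ δ ∈ Finset.Iic γ, (∑ α ∈ S δ, D α) x * (∑ α ∈ S (γ - δ), D α) y
    intro γ hγ x y
    have hsum : ∀ (s : Finset (Fin p → ℕ)) (z : A),
        (∑ α ∈ s, D α) z = ∑ α ∈ s, D α z := fun s z => by
      simp [LinearMap.sum_apply]
    -- the pair set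
    set T : Finset ((Fin p → ℕ) × (Fin p → ℕ)) :=
      ((Finset.Iic (fun _ : Fin p => ∑ j, γ j)) ×ˢ
        (Finset.Iic (fun _ : Fin p => ∑ j, γ j))).filter
        (fun t => (∑ i, t.1 i • B i) + (∑ i, t.2 i • B i) = γ) with hT
    have smul_split : ∀ t : (Fin p → ℕ) × (Fin p → ℕ),
        (∑ i, (t.1 + t.2) i • B i) = (∑ i, t.1 i • B i) + (∑ i, t.2 i • B i) := by
      intro t
      rw [← Finset.sum_add_distrib]
      refine Finset.sum_congr rfl fun i _ => ?_
      simp [add_smul]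
    have step1 : ∑ α ∈ S γ, D α (x * y)
        = ∑ α ∈ S γ, ∑ β ∈ Finset.Iic α, D β x * D (α - β) y := by
      refine Finset.sum_congr rfl fun α hα => ?_
      have hαB : (∑ i, α i • B i) = γ := (Finset.mem_filter.mp hα).2
      exact hLeib α (hcompat α (by rw [hαB]; exact hγ)) x y
    have step2 : ∑ α ∈ S γ, ∑ β ∈ Finset.Iic α, D β x * D (α - β) y
        = ∑ t ∈ T, D t.1 x * D t.2 y := by
      rw [Finset.sum_sigma']
      refine Finset.sum_bij' (fun a _ => (a.2, a.1 - a.2))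
        (fun t _ => ⟨t.1 + t.2, t.1⟩) ?_ ?_ ?_ ?_ ?_
      · rintro ⟨α, β⟩ ha
        rw [Finset.mem_sigma] at ha
        obtain ⟨hα, hβ⟩ := ha
        have hβα : β ≤ α := Finset.mem_Iic.mp hβ
        have hαN := Finset.mem_Iic.mp (Finset.mem_filter.mp hα).1
        have hαB : (∑ i, α i • B i) = γ := (Finset.mem_filter.mp hα).2
        refine Finset.mem_filter.mpr ⟨Finset.mem_product.mpr
          ⟨Finset.mem_Iic.mpr (le_trans hβα hαN),
           Finset.mem_Iic.mpr (le_trans (tsub_le_self) hαN)⟩, ?_⟩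
        have : β + (α - β) = α := add_tsub_cancel_of_le hβα
        calc (∑ i, β i • B i) + (∑ i, (α - β) i • B i)
            = ∑ i, (β + (α - β)) i • B i := (smul_split (β, α - β)).symm
          _ = γ := by rw [this, hαB]
      · rintro ⟨β, ε⟩ ht
        obtain ⟨-, hsum'⟩ := Finset.mem_filter.mp ht
        refine Finset.mem_sigma.mpr ⟨hmemS γ (β + ε) ?_, Finset.mem_Iic.mpr
          (le_add_of_nonneg_right zero_le)⟩
        rw [smul_split (β, ε)]
        exact hsum'
      · rintro ⟨α, β⟩ ha
        rw [Finset.mem_sigma] at ha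
        have hβα : β ≤ α := Finset.mem_Iic.mp ha.2
        simp only
        congr 1
        exact add_tsub_cancel_of_le hβα
      · rintro ⟨β, ε⟩ ht
        simp only
        rw [add_tsub_cancel_left]
      · rintro ⟨α, β⟩ ha
        rfl
    have step3 : ∑ t ∈ T, D t.1 x * D t.2 y
        = ∑ δ ∈ Finset.Iic γ, ∑ t ∈ T.filter (fun t => (∑ i, t.1 i • B i) = δ),
            D t.1 x * D t.2 y := by
      refine (Finset.sum_fiberwise_of_maps_to ?_ _).symm
      intro t ht
      obtain ⟨-, hsum'⟩ := Finset.mem_filter.mp ht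
      exact Finset.mem_Iic.mpr (le_of_le_of_eq le_self_add hsum')
    have step4 : ∀ δ ∈ Finset.Iic γ,
        T.filter (fun t => (∑ i, t.1 i • B i) = δ) = S δ ×ˢ S (γ - δ) := by
      intro δ hδ
      have hδγ : δ ≤ γ := Finset.mem_Iic.mp hδ
      ext t
      constructor
      · intro ht
        obtain ⟨ht', h1⟩ := Finset.mem_filter.mp ht
        obtain ⟨-, hsum'⟩ := Finset.mem_filter.mp ht'
        have h2 : (∑ i, t.2 i • B i) = γ - δ := by
          rw [← hsum', h1, add_tsub_cancel_left]
        exact Finset.mem_product.mpr ⟨hmemS δ t.1 h1, hmemS (γ - δ) t.2 h2⟩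
      · intro ht
        obtain ⟨h1, h2⟩ := Finset.mem_product.mp ht
        have hb1 : (∑ i, t.1 i • B i) = δ := (Finset.mem_filter.mp h1).2
        have hb2 : (∑ i, t.2 i • B i) = γ - δ := (Finset.mem_filter.mp h2).2
        refine Finset.mem_filter.mpr ⟨Finset.mem_filter.mpr ⟨Finset.mem_product.mpr
          ⟨Finset.mem_Iic.mpr fun i => le_trans (key δ t.1 hb1 i)
            (Finset.sum_le_sum fun j _ => hδγ j),
           Finset.mem_Iic.mpr fun i => le_trans (key (γ - δ) t.2 hb2 i)
            (Finset.sum_le_sum fun j _ => tsub_le_self)⟩, ?_⟩, hb1⟩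
        rw [hb1, hb2, add_tsub_cancel_of_le hδγ]
    rw [hsum, step1, step2, step3]
    refine Finset.sum_congr rfl fun δ hδ => ?_
    rw [step4 δ hδ, hsum, hsum, Finset.sum_mul_sum, ← Finset.sum_product']
end
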